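/- arXiv:1804.02693 — 2 statements merged into one kernel-verified Lean document; each statement's English description precedes it below -/
import Mathlib

section
/- Suppose the finite potential game is tie-free, and let M denote the set of Nash equilibria (assumed a proper subset of 𝒜). Fix T > 0. Let m_min := min_{1≤i≤n} |A_i|, Z_max(T) := max over players i and profiles a_{−i} of Z_i(a_{−i}), and Γ_T^LLL := 1/(n·Z_max(T)). For a ∉ M let ξ^LLL(a) be the maximal length of a zero-cost LLL path from a to M and σ^ML(a) the minimal length of a zero-cost ML path from a to M, and let MPLR := max_{a∉M} ξ^LLL(a)/σ^ML(a). If m_min ≥ (1/n)·(1/Γ_T^LLL)^{MPLR}, then for every a ∉ M, every zero-cost LLL path ω from a to M, and every zero-cost ML path ω′ from a to M: ∏_{k=0}^{|ω|−1} P_T^LLL(ω_k, ω_{k+1}) ≥ (Γ_T^LLL)^{ξ^LLL(a)} ≥ (1/(n·m_min))^{σ^ML(a)} ≥ ∏_{k=0}^{|ω′|−1} P_T^ML(ω′_k, ω′_{k+1}). -/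
open Finset Real Filter Topology

variable {n : ℕ} {A : Fin n → Type*}

section Defs
variable [∀ i, Fintype (A i)] [∀ i, DecidableEq (A i)] [∀ i, Nonempty (A i)]

/-- `a` and `b` differ in exactly coordinate `i`. -/
def Neighbor (a b : ∀ i, A i) (i : Fin n) : Prop :=
  a i ≠ b i ∧ ∀ j, j ≠ i → a j = b j

instance (a b : ∀ i, A i) (i : Fin n) : Decidable (Neighbor a b i) :=
  inferInstanceAs (Decidable (_ ∧ _))

/-- `φ` is a potential function for the game with utilities `U`. -/
def IsPotential (U : Fin n → (∀ i, A i) → ℝ) (φ : (∀ i, A i) → ℝ) : Prop :=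
  ∀ (i : Fin n) (a : ∀ j, A j) (α α' : A i),
    U i (Function.update a i α) - U i (Function.update a i α')
      = φ (Function.update a i α) - φ (Function.update a i α')

/-- Best attainable utility of player `i` against `a₋ᵢ`. -/
noncomputable def bestVal (U : Fin n → (∀ i, A i) → ℝ) (i : Fin n) (a : ∀ j, A j) : ℝ :=
  Finset.univ.sup' Finset.univ_nonempty fun β : A i => U i (Function.update a i β)

open Classical in
/-- Best response set of player `i` against `a₋ᵢ`. -/
noncomputable def BR (U : Fin n → (∀ i, A i) → ℝ) (i : Fin n) (a : ∀ j, A j) : Finset (A i) :=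
  Finset.univ.filter fun β => U i (Function.update a i β) = bestVal U i a

/-- Metropolis learning transition cost. -/
noncomputable def VML (U : Fin n → (∀ i, A i) → ℝ) (a b : ∀ i, A i) : ℝ :=
  ∑ i, if a i ≠ b i then max (U i a - U i b) 0 else 0

/-- Log-linear learning transition cost. -/
noncomputable def VLLL (U : Fin n → (∀ i, A i) → ℝ) (a b : ∀ i, A i) : ℝ :=
  ∑ i, if a i ≠ b i then bestVal U i a - U i b else 0

noncomputable def PMLoff (U : Fin n → (∀ i, A i) → ℝ) (T : ℝ) (a b : ∀ i, A i) : ℝ :=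
  ∑ i, if Neighbor a b i then
    (1 / ((n : ℝ) * (Fintype.card (A i) : ℝ))) * Real.exp (-(max (U i a - U i b) 0) / T)
  else 0

/-- Metropolis learning transition matrix. -/
noncomputable def PML (U : Fin n → (∀ i, A i) → ℝ) (T : ℝ) (a b : ∀ i, A i) : ℝ :=
  if a = b then 1 - ∑ c, PMLoff U T a c else PMLoff U T a b

noncomputable def PLLLoff (U : Fin n → (∀ i, A i) → ℝ) (T : ℝ) (a b : ∀ i, A i) : ℝ :=
  ∑ i, if Neighbor a b i then
    (1 / (n : ℝ)) * Real.exp (U i b / T) / ∑ β : A i, Real.exp (U i (Function.update a i β) / T)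
  else 0

/-- Log-linear learning transition matrix. -/
noncomputable def PLLL (U : Fin n → (∀ i, A i) → ℝ) (T : ℝ) (a b : ∀ i, A i) : ℝ :=
  if a = b then 1 - ∑ c, PLLLoff U T a c else PLLLoff U T a b

/-- The normalizing constant `Z_i(a₋ᵢ)`. -/
noncomputable def Zi (U : Fin n → (∀ i, A i) → ℝ) (T : ℝ) (i : Fin n) (a : ∀ j, A j) : ℝ :=
  ∑ β : A i, Real.exp (-(bestVal U i a - U i (Function.update a i β)) / T)

/-- The Gibbs distribution. -/
noncomputable def gibbs (φ : (∀ i, A i) → ℝ) (T : ℝ) (a : ∀ i, A i) : ℝ :=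
  Real.exp (φ a / T) / ∑ b, Real.exp (φ b / T)

/-- Nash equilibrium. -/
def IsNash (U : Fin n → (∀ i, A i) → ℝ) (a : ∀ i, A i) : Prop :=
  ∀ (i : Fin n) (α : A i), U i (Function.update a i α) ≤ U i a

/-- No player is ever indifferent between two of its own actions. -/
def TieFree (U : Fin n → (∀ i, A i) → ℝ) : Prop :=
  ∀ (i : Fin n) (a : ∀ j, A j) (α α' : A i), α ≠ α' →
    U i (Function.update a i α) ≠ U i (Function.update a i α')

/-- `ω 0, ω 1, …, ω p` is a path: pairwise-distinct entries, consecutive entries neighbors. -/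
def IsPath (ω : ℕ → ∀ i, A i) (p : ℕ) : Prop :=
  (∀ k ≤ p, ∀ l ≤ p, ω k = ω l → k = l) ∧ ∀ k < p, ∃ i, Neighbor (ω k) (ω (k + 1)) i

/-- Zero-cost paths from `a` to the set `B` w.r.t. the cost `V`, encoded as (length, path). -/
def ZPaths (V : (∀ i, A i) → (∀ i, A i) → ℝ) (a : ∀ i, A i) (B : Set (∀ i, A i)) :
    Set (ℕ × (ℕ → ∀ i, A i)) :=
  {q | IsPath q.2 q.1 ∧ q.2 0 = a ∧ q.2 q.1 ∈ B ∧ ∀ k < q.1, V (q.2 k) (q.2 (k + 1)) = 0}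

/-- Minimal length of a zero-cost path from `a` to `B`. -/
noncomputable def minLen (V : (∀ i, A i) → (∀ i, A i) → ℝ) (a : ∀ i, A i)
    (B : Set (∀ i, A i)) : ℕ :=
  sInf {p | ∃ ω, (p, ω) ∈ ZPaths V a B}

/-- Maximal length of a zero-cost path from `a` to `B`. -/
noncomputable def maxLen (V : (∀ i, A i) → (∀ i, A i) → ℝ) (a : ∀ i, A i)
    (B : Set (∀ i, A i)) : ℕ :=
  sSup {p | ∃ ω, (p, ω) ∈ ZPaths V a B}

/-- Communication altitude w.r.t. the cost `V` and potential `φ`. -/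
noncomputable def Ac (V : (∀ i, A i) → (∀ i, A i) → ℝ) (φ : (∀ i, A i) → ℝ)
    (x y : ∀ i, A i) : ℝ :=
  sSup {v | ∃ (p : ℕ) (ω : ℕ → ∀ i, A i), 0 < p ∧ IsPath ω p ∧ ω 0 = x ∧ ω p = y ∧
    v = ⨅ k : Fin p, (φ (ω k) - V (ω k) (ω (k + 1)))}

/-- `max_i |A_i|`. -/
noncomputable def mMax (A : Fin n → Type*) [∀ i, Fintype (A i)] : ℕ :=
  ⨆ i : Fin n, Fintype.card (A i)

/-- `min_i |A_i|`. -/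
noncomputable def mMin (A : Fin n → Type*) [∀ i, Fintype (A i)] : ℕ :=
  ⨅ i : Fin n, Fintype.card (A i)

/-- `Z_max(T)`. -/
noncomputable def Zmax (U : Fin n → (∀ i, A i) → ℝ) (T : ℝ) : ℝ :=
  ⨆ i : Fin n, ⨆ a : ∀ j, A j, Zi U T i a

noncomputable def GammaML (A : Fin n → Type*) [∀ i, Fintype (A i)] : ℝ :=
  1 / ((n : ℝ) * (mMax A : ℝ))

noncomputable def GammaLLL (U : Fin n → (∀ i, A i) → ℝ) (T : ℝ) : ℝ :=
  1 / ((n : ℝ) * Zmax U T)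

end Defs

/-!
Along a zero-cost LLL path every step moves a player to its best response, which has probability
exactly `1 / (n Z_i(a₋ᵢ)) ≥ Γ`; as the path has at most `ξ(a)` steps and `Γ ≤ 1`, its probability
is at least `Γ ^ ξ(a)`. Dually, every ML step has probability at most `1 / (n |A_i|) ≤ 1 / (n m_min)`
and an ML path to the equilibria has at least `σ(a)` steps. The middle inequality is the hypothesis
on `m_min`, read as `1 / (n m_min) ≤ Γ ^ MPLR`, raised to the power `σ(a)`, combined with
`ξ(a) ≤ MPLR · σ(a)`.
-/

namespace Neighbor

variable {a b : ∀ i, A i} {i : Fin n}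

lemma ne (h : Neighbor a b i) : a ≠ b :=
  fun he => h.1 (congrFun he i)

lemma eq_of_neighbor {j : Fin n} (hi : Neighbor a b i) (hj : Neighbor a b j) : j = i := by
  by_contra hne
  exact hi.1 (hj.2 i (Ne.symm hne))

variable [∀ i, DecidableEq (A i)]

lemma sum_ite_ne (h : Neighbor a b i) (f : Fin n → ℝ) :
    (∑ j, if a j ≠ b j then f j else 0) = f i := by
  rw [sum_eq_single_of_mem i (mem_univ i) fun j _ hj => if_neg (not_not_intro (h.2 j hj)),
    if_pos h.1]

lemma sum_ite_neighbor (h : Neighbor a b i) (f : Fin n → ℝ) :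
    (∑ j, if Neighbor a b j then f j else 0) = f i := by
  rw [sum_eq_single_of_mem i (mem_univ i) fun j _ hj => if_neg fun h' => hj (h.eq_of_neighbor h'),
    if_pos h]

end Neighbor

section Paths

variable {V : (∀ i, A i) → (∀ i, A i) → ℝ} {a : ∀ i, A i} {B : Set (∀ i, A i)}
  {q : ℕ × (ℕ → ∀ i, A i)}

lemma IsPath.length_lt_card [Fintype (∀ i, A i)] {ω : ℕ → ∀ i, A i} {p : ℕ} (h : IsPath ω p) :
    p < Fintype.card (∀ i, A i) := by
  have hinj : Function.Injective fun k : Fin (p + 1) => ω k := fun k l he =>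
    Fin.ext (h.1 k (Nat.lt_succ_iff.mp k.isLt) l (Nat.lt_succ_iff.mp l.isLt) he)
  simpa using Fintype.card_le_of_injective _ hinj

lemma maxLen_le_card [Fintype (∀ i, A i)] : maxLen V a B ≤ Fintype.card (∀ i, A i) :=
  csSup_le' fun _ ⟨_, h⟩ => h.1.length_lt_card.le

lemma le_maxLen [Fintype (∀ i, A i)] (hq : q ∈ ZPaths V a B) : q.1 ≤ maxLen V a B :=
  le_csSup ⟨_, fun _ ⟨_, h⟩ => h.1.length_lt_card.le⟩ ⟨q.2, hq⟩

lemma minLen_le (hq : q ∈ ZPaths V a B) : minLen V a B ≤ q.1 :=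
  Nat.sInf_le ⟨q.2, hq⟩

lemma minLen_pos (ha : a ∉ B) (hq : q ∈ ZPaths V a B) : 0 < minLen V a B := by
  obtain ⟨ω, hω⟩ := Nat.sInf_mem (⟨q.1, q.2, hq⟩ : {p | ∃ ω, (p, ω) ∈ ZPaths V a B}.Nonempty)
  refine Nat.pos_of_ne_zero fun h0 => ha ?_
  rw [← hω.2.1, ← h0]
  exact hω.2.2.1

end Paths

section LogLinear

variable [∀ i, Fintype (A i)] [∀ i, Nonempty (A i)] (U : Fin n → (∀ i, A i) → ℝ) {T : ℝ}

lemma exists_eq_bestVal (i : Fin n) (a : ∀ j, A j) :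
    ∃ β : A i, U i (Function.update a i β) = bestVal U i a :=
  let ⟨β, _, hβ⟩ := exists_mem_eq_sup' univ_nonempty fun β : A i => U i (Function.update a i β)
  ⟨β, hβ.symm⟩

lemma one_le_Zi (i : Fin n) (a : ∀ j, A j) : 1 ≤ Zi U T i a := by
  obtain ⟨β, hβ⟩ := exists_eq_bestVal U i a
  calc (1 : ℝ) = exp (-(bestVal U i a - U i (Function.update a i β)) / T) := by simp [hβ]
    _ ≤ Zi U T i a :=
      single_le_sum (f := fun β : A i => exp (-(bestVal U i a - U i (Function.update a i β)) / T))
        (fun _ _ => (exp_pos _).le) (mem_univ β)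

lemma Zi_le_Zmax (i : Fin n) (a : ∀ j, A j) : Zi U T i a ≤ Zmax U T :=
  (le_ciSup (Finite.bddAbove_range _) a).trans
    (le_ciSup (f := fun i => ⨆ a : ∀ j, A j, Zi U T i a) (Finite.bddAbove_range _) i)

lemma sum_exp_eq_Zi_mul (hT : T ≠ 0) (i : Fin n) (a : ∀ j, A j) :
    ∑ β : A i, exp (U i (Function.update a i β) / T) = Zi U T i a * exp (bestVal U i a / T) := by
  rw [Zi, sum_mul]
  refine sum_congr rfl fun β _ => ?_
  rw [← exp_add]
  congr 1
  field_simp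
  ring

variable {U}

lemma one_le_Zmax (hn : 0 < n) : 1 ≤ Zmax U T :=
  (one_le_Zi U ⟨0, hn⟩ fun j => Classical.arbitrary (A j)).trans (Zi_le_Zmax U _ _)

lemma GammaLLL_pos (hn : 0 < n) : 0 < GammaLLL U T := by
  have := one_le_Zmax (U := U) (T := T) hn
  unfold GammaLLL
  have : (0 : ℝ) < n := by exact_mod_cast hn
  positivity

lemma GammaLLL_le_one (hn : 0 < n) : GammaLLL U T ≤ 1 := by
  have hZ := one_le_Zmax (U := U) (T := T) hn
  have hn' : (1 : ℝ) ≤ n := by exact_mod_cast hn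
  rw [GammaLLL, div_le_one (by positivity)]
  nlinarith

variable [∀ i, DecidableEq (A i)] {a b : ∀ i, A i} {i : Fin n}

lemma PLLL_eq_of_VLLL_eq_zero (hT : T ≠ 0) (h : Neighbor a b i) (hV : VLLL U a b = 0) :
    PLLL U T a b = 1 / (n * Zi U T i a) := by
  have hb : U i b = bestVal U i a := by
    rw [VLLL, h.sum_ite_ne] at hV
    linarith
  rw [PLLL, if_neg h.ne, PLLLoff, h.sum_ite_neighbor, hb, sum_exp_eq_Zi_mul U hT]
  have := exp_pos (bestVal U i a / T)
  field_simp

lemma GammaLLL_le_PLLL (hT : T ≠ 0) (h : Neighbor a b i) (hV : VLLL U a b = 0) :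
    GammaLLL U T ≤ PLLL U T a b := by
  rw [PLLL_eq_of_VLLL_eq_zero hT h hV, GammaLLL]
  have : (0 : ℝ) < n := by exact_mod_cast i.pos
  have := one_le_Zi U (T := T) i a
  gcongr
  exact Zi_le_Zmax U i a

lemma pow_maxLen_le_prod_PLLL (hn : 0 < n) (hT : T ≠ 0) {B : Set (∀ i, A i)}
    {q : ℕ × (ℕ → ∀ i, A i)} (hq : q ∈ ZPaths (VLLL U) a B) :
    GammaLLL U T ^ maxLen (VLLL U) a B ≤ ∏ k ∈ range q.1, PLLL U T (q.2 k) (q.2 (k + 1)) :=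
  calc GammaLLL U T ^ maxLen (VLLL U) a B
      ≤ GammaLLL U T ^ q.1 :=
        pow_le_pow_of_le_one (GammaLLL_pos hn).le (GammaLLL_le_one hn) (le_maxLen hq)
    _ = ∏ _k ∈ range q.1, GammaLLL U T := by rw [prod_const, card_range]
    _ ≤ ∏ k ∈ range q.1, PLLL U T (q.2 k) (q.2 (k + 1)) := by
      refine prod_le_prod (fun _ _ => (GammaLLL_pos hn).le) fun k hk => ?_
      obtain ⟨i, hi⟩ := hq.1.2 k (mem_range.1 hk)
      exact GammaLLL_le_PLLL hT hi (hq.2.2.2 k (mem_range.1 hk))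

end LogLinear

section Metropolis

lemma one_le_mMin [∀ i, Fintype (A i)] [∀ i, Nonempty (A i)] (hn : 0 < n) : 1 ≤ mMin A :=
  haveI : Nonempty (Fin n) := ⟨⟨0, hn⟩⟩
  le_ciInf fun _ => Fintype.card_pos

lemma mMin_le_card [∀ i, Fintype (A i)] (i : Fin n) : mMin A ≤ Fintype.card (A i) :=
  ciInf_le (OrderBot.bddBelow _) i

variable [∀ i, Fintype (A i)] [∀ i, DecidableEq (A i)] {U : Fin n → (∀ i, A i) → ℝ} {T : ℝ}
  {a b : ∀ i, A i} {i : Fin n}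

lemma PML_nonneg_of_neighbor (h : Neighbor a b i) : 0 ≤ PML U T a b := by
  rw [PML, if_neg h.ne, PMLoff, h.sum_ite_neighbor]
  positivity

lemma PML_le_of_neighbor [∀ i, Nonempty (A i)] (hT : 0 ≤ T) (h : Neighbor a b i) :
    PML U T a b ≤ 1 / (n * mMin A) := by
  rw [PML, if_neg h.ne, PMLoff, h.sum_ite_neighbor]
  have hexp : exp (-max (U i a - U i b) 0 / T) ≤ 1 :=
    exp_le_one_iff.2 (div_nonpos_of_nonpos_of_nonneg (neg_nonpos.2 (le_max_right _ _)) hT)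
  have hn : (0 : ℝ) < n := by exact_mod_cast i.pos
  have hm : (0 : ℝ) < mMin A := by exact_mod_cast one_le_mMin i.pos
  have hcard : (mMin A : ℝ) ≤ Fintype.card (A i) := by exact_mod_cast mMin_le_card i
  calc 1 / (n * Fintype.card (A i)) * exp (-max (U i a - U i b) 0 / T)
      ≤ 1 / (n * Fintype.card (A i)) := mul_le_of_le_one_right (by positivity) hexp
    _ ≤ 1 / (n * mMin A) := by gcongr

lemma prod_PML_le_pow_minLen [∀ i, Nonempty (A i)] (hn : 0 < n) (hT : 0 ≤ T)
    {B : Set (∀ i, A i)} {q : ℕ × (ℕ → ∀ i, A i)} (hq : q ∈ ZPaths (VML U) a B) :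
    ∏ k ∈ range q.1, PML U T (q.2 k) (q.2 (k + 1)) ≤ (1 / (n * mMin A)) ^ minLen (VML U) a B := by
  have hnm : (1 : ℝ) ≤ n * mMin A := by
    have : (1 : ℝ) ≤ n := by exact_mod_cast hn
    have : (1 : ℝ) ≤ mMin A := by exact_mod_cast one_le_mMin (A := A) hn
    nlinarith
  calc ∏ k ∈ range q.1, PML U T (q.2 k) (q.2 (k + 1))
      ≤ ∏ _k ∈ range q.1, 1 / (n * mMin A : ℝ) := by
        refine prod_le_prod (fun k hk => ?_) fun k hk => ?_ <;>
          obtain ⟨i, hi⟩ := hq.1.2 k (mem_range.1 hk)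
        exacts [PML_nonneg_of_neighbor hi, PML_le_of_neighbor hT hi]
    _ = (1 / (n * mMin A)) ^ q.1 := by rw [prod_const, card_range]
    _ ≤ (1 / (n * mMin A)) ^ minLen (VML U) a B :=
        pow_le_pow_of_le_one (by positivity) (div_le_one_of_le₀ hnm (by positivity)) (minLen_le hq)

end Metropolis

noncomputable def maxPathLengthRatio [∀ i, Fintype (A i)] [∀ i, DecidableEq (A i)]
    [∀ i, Nonempty (A i)] (U : Fin n → (∀ i, A i) → ℝ) : ℝ :=
  sSup {v : ℝ | ∃ a : ∀ j, A j, ¬ IsNash U a ∧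
    v = (maxLen (VLLL U) a {x | IsNash U x} : ℝ) / (minLen (VML U) a {x | IsNash U x} : ℝ)}

lemma div_le_maxPathLengthRatio [∀ i, Fintype (A i)] [∀ i, DecidableEq (A i)]
    [∀ i, Nonempty (A i)] {U : Fin n → (∀ i, A i) → ℝ} {a : ∀ i, A i} (ha : ¬ IsNash U a) :
    (maxLen (VLLL U) a {x | IsNash U x} : ℝ) / (minLen (VML U) a {x | IsNash U x} : ℝ)
      ≤ maxPathLengthRatio U := by
  refine le_csSup ⟨Fintype.card (∀ i, A i), ?_⟩ ⟨a, ha, rfl⟩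
  rintro _ ⟨a', -, rfl⟩
  exact (div_nat_le_self_of_nonnneg (Nat.cast_nonneg _) _).trans (by exact_mod_cast maxLen_le_card)

lemma one_div_mul_le_rpow {x y Γ M : ℝ} (hx : 0 < x) (hy : 0 < y) (hΓ : 0 < Γ)
    (h : 1 / x * (1 / Γ) ^ M ≤ y) : 1 / (x * y) ≤ Γ ^ M := by
  rw [one_div Γ, inv_rpow hΓ.le, one_div_mul_eq_div, div_le_iff₀ hx] at h
  rwa [one_div, inv_le_comm₀ (by positivity) (rpow_pos_of_pos hΓ M), mul_comm]

lemma pow_le_pow_of_le_rpow {Γ b M : ℝ} {ξ σ : ℕ} (hΓ₀ : 0 < Γ) (hΓ₁ : Γ ≤ 1) (hb : 0 ≤ b)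
    (hbΓ : b ≤ Γ ^ M) (hξ : (ξ : ℝ) ≤ M * σ) : b ^ σ ≤ Γ ^ ξ :=
  calc b ^ σ ≤ (Γ ^ M) ^ σ := pow_le_pow_left₀ hb hbΓ σ
    _ = Γ ^ (M * σ) := by rw [← rpow_natCast, ← rpow_mul hΓ₀.le]
    _ ≤ Γ ^ (ξ : ℝ) := rpow_le_rpow_of_exponent_ge hΓ₀ hΓ₁ hξ
    _ = Γ ^ ξ := rpow_natCast Γ ξ

section
variable [∀ i, Fintype (A i)] [∀ i, DecidableEq (A i)] [∀ i, Nonempty (A i)]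

theorem statement14_general (hn : 0 < n)
    (U : Fin n → (∀ i, A i) → ℝ)
    (T : ℝ) (hT : 0 < T)
    (hmin : (1 / (n : ℝ)) * (1 / GammaLLL U T) ^
        sSup {v : ℝ | ∃ a : ∀ j, A j, ¬ IsNash U a ∧
          v = (maxLen (VLLL U) a {x | IsNash U x} : ℝ)
            / (minLen (VML U) a {x | IsNash U x} : ℝ)}
      ≤ (mMin A : ℝ)) :
    ∀ a : ∀ j, A j, ¬ IsNash U a →
      ∀ q ∈ ZPaths (VLLL U) a {x | IsNash U x},
        ∀ q' ∈ ZPaths (VML U) a {x | IsNash U x},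
          GammaLLL U T ^ maxLen (VLLL U) a {x | IsNash U x}
              ≤ ∏ k ∈ Finset.range q.1, PLLL U T (q.2 k) (q.2 (k + 1))
          ∧ (1 / ((n : ℝ) * (mMin A : ℝ))) ^ minLen (VML U) a {x | IsNash U x}
              ≤ GammaLLL U T ^ maxLen (VLLL U) a {x | IsNash U x}
          ∧ ∏ k ∈ Finset.range q'.1, PML U T (q'.2 k) (q'.2 (k + 1))
              ≤ (1 / ((n : ℝ) * (mMin A : ℝ))) ^ minLen (VML U) a {x | IsNash U x} := by
  intro a ha q hq q' hq'
  refine ⟨pow_maxLen_le_prod_PLLL hn hT.ne' hq, ?_, prod_PML_le_pow_minLen hn hT.le hq'⟩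
  have hΓ := GammaLLL_pos (U := U) (T := T) hn
  have hσ : (0 : ℝ) < minLen (VML U) a {x | IsNash U x} := by exact_mod_cast minLen_pos ha hq'
  refine pow_le_pow_of_le_rpow hΓ (GammaLLL_le_one hn) (by positivity)
    (one_div_mul_le_rpow (by exact_mod_cast hn) (by exact_mod_cast one_le_mMin hn) hΓ hmin) ?_
  exact (div_le_iff₀ hσ).1 (div_le_maxPathLengthRatio ha)

/-- In a tie-free potential game with `M ⊊ 𝒜`, if
`m_min ≥ (1/n)·(1/Γ_T^LLL)^MPLR`, then for every non-Nash `a`, every zero-cost LLL path `ω`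
from `a` to `M` and every zero-cost ML path `ω′` from `a` to `M`:
`∏ P_T^LLL(ω) ≥ (Γ_T^LLL)^{ξ^LLL(a)} ≥ (1/(n·m_min))^{σ^ML(a)} ≥ ∏ P_T^ML(ω′)`. -/
theorem statement14 (hn : 0 < n)
    (U : Fin n → (∀ i, A i) → ℝ) (φ : (∀ i, A i) → ℝ) (hpot : IsPotential U φ)
    (htf : TieFree U) (hM : ∃ a : ∀ j, A j, ¬ IsNash U a)
    (T : ℝ) (hT : 0 < T)
    (hmin : (1 / (n : ℝ)) * (1 / GammaLLL U T) ^
        sSup {v : ℝ | ∃ a : ∀ j, A j, ¬ IsNash U a ∧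
          v = (maxLen (VLLL U) a {x | IsNash U x} : ℝ)
            / (minLen (VML U) a {x | IsNash U x} : ℝ)}
      ≤ (mMin A : ℝ)) :
    ∀ a : ∀ j, A j, ¬ IsNash U a →
      ∀ q ∈ ZPaths (VLLL U) a {x | IsNash U x},
        ∀ q' ∈ ZPaths (VML U) a {x | IsNash U x},
          GammaLLL U T ^ maxLen (VLLL U) a {x | IsNash U x}
              ≤ ∏ k ∈ Finset.range q.1, PLLL U T (q.2 k) (q.2 (k + 1))
          ∧ (1 / ((n : ℝ) * (mMin A : ℝ))) ^ minLen (VML U) a {x | IsNash U x}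
              ≤ GammaLLL U T ^ maxLen (VLLL U) a {x | IsNash U x}
          ∧ ∏ k ∈ Finset.range q'.1, PML U T (q'.2 k) (q'.2 (k + 1))
              ≤ (1 / ((n : ℝ) * (mMin A : ℝ))) ^ minLen (VML U) a {x | IsNash U x} :=
  statement14_general hn U T hT hmin

end
end

section
/- Let D be a nonempty proper subset of 𝒜. For l ∈ {ML, LLL} define the exit height H_e^l(D) := min_{x∈D} max_{y∈𝒜∖D} (φ(x) − A_c^l(x, y)). Then H_e^LLL(D) ≥ H_e^ML(D); i.e., the exit height of any subset of the joint action space under log-linear learning is at least its exit height under Metropolis learning. -/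
open Finset Real Filter Topology

variable {n : ℕ} {A : Fin n → Type*}

/-! On neighbouring profiles `V^ML ≤ V^LLL`, because both `U_i(a)` and `U_i(a')` are at most the
best-reply value `max_β U_i(β, a₋ᵢ)`. So every path has a lower altitude under log-linear learning,
whence `A_c^LLL ≤ A_c^ML` and the exit height, antitone in `A_c`, can only increase. -/

lemma Neighbor.eq_update {a b : ∀ i, A i} {i : Fin n} (h : Neighbor a b i) :
    b = Function.update a i (b i) := by
  funext j
  by_cases hj : j = i
  · subst hj; simp
  · rw [Function.update_of_ne hj]; exact (h.2 j hj).symm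

lemma le_bestVal [∀ i, Fintype (A i)] [∀ i, Nonempty (A i)] (U : Fin n → (∀ i, A i) → ℝ)
    (i : Fin n) (a : ∀ j, A j) (β : A i) :
    U i (Function.update a i β) ≤ bestVal U i a :=
  Finset.le_sup' (fun β : A i => U i (Function.update a i β)) (Finset.mem_univ β)

lemma VML_le_VLLL [∀ i, Fintype (A i)] [∀ i, DecidableEq (A i)] [∀ i, Nonempty (A i)]
    (U : Fin n → (∀ i, A i) → ℝ) {a b : ∀ i, A i} {i : Fin n} (h : Neighbor a b i) :
    VML U a b ≤ VLLL U a b := by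
  refine Finset.sum_le_sum fun j _ => ?_
  split_ifs with hj
  · obtain rfl : j = i := by_contra fun hji => hj (h.2 j hji)
    have hUa : U j a ≤ bestVal U j a := by
      simpa only [Function.update_eq_self] using le_bestVal U j a (a j)
    have hUb : U j b ≤ bestVal U j a := by
      rw [h.eq_update]; exact le_bestVal U j a (b j)
    exact max_le (by linarith) (by linarith)
  · exact le_rfl

noncomputable def pathAltitude (V : (∀ i, A i) → (∀ i, A i) → ℝ) (φ : (∀ i, A i) → ℝ)
    (p : ℕ) (ω : ℕ → ∀ i, A i) : ℝ :=
  ⨅ k : Fin p, (φ (ω k) - V (ω k) (ω (k + 1)))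

def PathsBetween (x y : ∀ i, A i) : Set (ℕ × (ℕ → ∀ i, A i)) :=
  {q | 0 < q.1 ∧ IsPath q.2 q.1 ∧ q.2 0 = x ∧ q.2 q.1 = y}

lemma Ac_eq_iSup (V : (∀ i, A i) → (∀ i, A i) → ℝ) (φ : (∀ i, A i) → ℝ) (x y : ∀ i, A i) :
    Ac V φ x y = ⨆ q : PathsBetween x y, pathAltitude V φ q.1.1 q.1.2 := by
  unfold Ac
  congr 1
  ext v
  simp only [Set.mem_range, Subtype.exists, PathsBetween, pathAltitude, Prod.exists]
  aesop

lemma pathAltitude_le (V : (∀ i, A i) → (∀ i, A i) → ℝ) (φ : (∀ i, A i) → ℝ)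
    {p : ℕ} (hp : 0 < p) (ω : ℕ → ∀ i, A i) :
    pathAltitude V φ p ω ≤ φ (ω 0) - V (ω 0) (ω 1) := by
  unfold pathAltitude
  simpa using ciInf_le (Set.finite_range _).bddBelow (⟨0, hp⟩ : Fin p)

lemma bddAbove_range_pathAltitude [∀ i, Finite (A i)] (V : (∀ i, A i) → (∀ i, A i) → ℝ)
    (φ : (∀ i, A i) → ℝ) (x y : ∀ i, A i) :
    BddAbove (Set.range fun q : PathsBetween x y => pathAltitude V φ q.1.1 q.1.2) := by
  obtain ⟨m, hm⟩ := (Set.finite_range (Function.uncurry V)).bddBelow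
  refine ⟨φ x - m, ?_⟩
  rintro _ ⟨⟨⟨p, ω⟩, hp, -, rfl, -⟩, rfl⟩
  have hVm : m ≤ V (ω 0) (ω 1) := hm ⟨(ω 0, ω 1), rfl⟩
  linarith [pathAltitude_le V φ hp ω]

lemma Ac_le_Ac_of_cost_le [∀ i, Finite (A i)] {V V' : (∀ i, A i) → (∀ i, A i) → ℝ}
    (φ : (∀ i, A i) → ℝ)
    (hVV' : ∀ a b i, Neighbor a b i → V a b ≤ V' a b) (x y : ∀ i, A i) :
    Ac V' φ x y ≤ Ac V φ x y := by
  rw [Ac_eq_iSup, Ac_eq_iSup]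
  refine ciSup_mono (bddAbove_range_pathAltitude V φ x y) fun ⟨⟨p, ω⟩, _, hpath, _⟩ =>
    ciInf_mono (Set.finite_range _).bddBelow fun k => ?_
  obtain ⟨i, hi⟩ := hpath.2 k k.isLt
  linarith [hVV' _ _ i hi]

section Defs
variable [∀ i, Fintype (A i)] [∀ i, DecidableEq (A i)] [∀ i, Nonempty (A i)]

theorem statement17_general
    (U : Fin n → (∀ i, A i) → ℝ) (φ : (∀ i, A i) → ℝ)
    (D : Finset (∀ j, A j)) (hD : D.Nonempty) (hDc : (Finset.univ \ D).Nonempty) :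
    D.inf' hD (fun x => (Finset.univ \ D).sup' hDc fun y => φ x - Ac (VML U) φ x y)
      ≤ D.inf' hD (fun x => (Finset.univ \ D).sup' hDc fun y => φ x - Ac (VLLL U) φ x y) := by
  gcongr with x _ y _
  exact Ac_le_Ac_of_cost_le φ (fun _ _ _ => VML_le_VLLL U) x y

/-- For every nonempty proper subset `D` of the joint action space,
`H_e^LLL(D) ≥ H_e^ML(D)`, where `H_e^l(D) = min_{x∈D} max_{y∉D} (φ(x) − A_c^l(x,y))`. -/
theorem statement17
    (U : Fin n → (∀ i, A i) → ℝ) (φ : (∀ i, A i) → ℝ) (hpot : IsPotential U φ)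
    (D : Finset (∀ j, A j)) (hD : D.Nonempty) (hDc : (Finset.univ \ D).Nonempty) :
    D.inf' hD (fun x => (Finset.univ \ D).sup' hDc fun y => φ x - Ac (VML U) φ x y)
      ≤ D.inf' hD (fun x => (Finset.univ \ D).sup' hDc fun y => φ x - Ac (VLLL U) φ x y) :=
  statement17_general U φ D hD hDc

end Defs
end
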